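/- Let T be a TBox in L_Φ and let I, I' be unreachable-objects-free interpretations (every domain element is reachable from some named individual a^I by a finite path of edges of basic roles) such that there exists an L_Φ-bisimulation between I and I'. Then I is a model of T if and only if I' is a model of T. -/

import Mathlib

/-- A set of DL-features (subset of {I, O, Q, U, Self}). -/
structure DLFeat where
  hasI : Bool
  hasO : Bool
  hasQ : Bool
  hasU : Bool
  hasSelf : Bool

/-- An interpretation with concept names `CN`, role names `RN`, individual names `IN`
and domain `D`. -/
structure Interp (CN RN IN : Type) (D : Type) where
  cInt : CN → Set D
  rInt : RN → D → D → Prop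
  iInt : IN → D

/-- Interpretation of a basic role: a role name, possibly inverted. -/
def brInt {CN RN IN D : Type} (I : Interp CN RN IN D) (R : RN × Bool) (x y : D) : Prop :=
  if R.2 then I.rInt R.1 y x else I.rInt R.1 x y

mutual
/-- Concepts of the full language (membership in `L_Φ` is a separate predicate). -/
inductive DLConcept (CN RN IN : Type) : Type where
  | atom (A : CN)
  | top
  | bot
  | neg (C : DLConcept CN RN IN)
  | conj (C D : DLConcept CN RN IN)
  | disj (C D : DLConcept CN RN IN)
  | all (R : DLRole CN RN IN) (C : DLConcept CN RN IN)
  | ex (R : DLRole CN RN IN) (C : DLConcept CN RN IN)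
  | nom (a : IN)
  | atLeast (n : ℕ) (r : RN) (inverted : Bool) (C : DLConcept CN RN IN)
  | atMost (n : ℕ) (r : RN) (inverted : Bool) (C : DLConcept CN RN IN)
  | exSelf (r : RN)
/-- Roles of the full language. -/
inductive DLRole (CN RN IN : Type) : Type where
  | name (r : RN)
  | eps
  | comp (R S : DLRole CN RN IN)
  | runion (R S : DLRole CN RN IN)
  | star (R : DLRole CN RN IN)
  | test (C : DLConcept CN RN IN)
  | inv (r : RN)
  | univ
end

/- The zag direction of `sem_zig` is `sem_zig` for the converse `hZ.symm`; this is why both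
statements quantify over the interpretations instead of fixing them. -/
mutual
/-- The concept belongs to the language `L_Φ`. -/
def DLConcept.inL {CN RN IN : Type} (Φ : DLFeat) : DLConcept CN RN IN → Prop
  | .atom _ => True
  | .top => True
  | .bot => True
  | .neg C => C.inL Φ
  | .conj C D => C.inL Φ ∧ D.inL Φ
  | .disj C D => C.inL Φ ∧ D.inL Φ
  | .all R C => R.inL Φ ∧ C.inL Φ
  | .ex R C => R.inL Φ ∧ C.inL Φ
  | .nom _ => Φ.hasO = true
  | .atLeast _ _ b C => Φ.hasQ = true ∧ (b = true → Φ.hasI = true) ∧ C.inL Φ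
  | .atMost _ _ b C => Φ.hasQ = true ∧ (b = true → Φ.hasI = true) ∧ C.inL Φ
  | .exSelf _ => Φ.hasSelf = true
/-- The role belongs to the language `L_Φ`. -/
def DLRole.inL {CN RN IN : Type} (Φ : DLFeat) : DLRole CN RN IN → Prop
  | .name _ => True
  | .eps => True
  | .comp R S => R.inL Φ ∧ S.inL Φ
  | .runion R S => R.inL Φ ∧ S.inL Φ
  | .star R => R.inL Φ
  | .test C => C.inL Φ
  | .inv _ => Φ.hasI = true
  | .univ => Φ.hasU = true
end

mutual
/-- Semantics of concepts. -/
def DLConcept.sem {CN RN IN D : Type} (I : Interp CN RN IN D) : DLConcept CN RN IN → Set D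
  | .atom A => I.cInt A
  | .top => Set.univ
  | .bot => ∅
  | .neg C => (DLConcept.sem I C)ᶜ
  | .conj C C' => DLConcept.sem I C ∩ DLConcept.sem I C'
  | .disj C C' => DLConcept.sem I C ∪ DLConcept.sem I C'
  | .all R C => {x | ∀ y, DLRole.sem I R x y → y ∈ DLConcept.sem I C}
  | .ex R C => {x | ∃ y, DLRole.sem I R x y ∧ y ∈ DLConcept.sem I C}
  | .nom a => {I.iInt a}
  | .atLeast n r b C =>
      {x | (n : Cardinal) ≤ Cardinal.mk {y // brInt I (r, b) x y ∧ y ∈ DLConcept.sem I C}}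
  | .atMost n r b C =>
      {x | Cardinal.mk {y // brInt I (r, b) x y ∧ y ∈ DLConcept.sem I C} ≤ (n : Cardinal)}
  | .exSelf r => {x | I.rInt r x x}
/-- Semantics of roles. -/
def DLRole.sem {CN RN IN D : Type} (I : Interp CN RN IN D) : DLRole CN RN IN → D → D → Prop
  | .name r => I.rInt r
  | .eps => Eq
  | .comp R S => Relation.Comp (DLRole.sem I R) (DLRole.sem I S)
  | .runion R S => fun x y => DLRole.sem I R x y ∨ DLRole.sem I S x y
  | .star R => Relation.ReflTransGen (DLRole.sem I R)
  | .test C => fun x y => x = y ∧ x ∈ DLConcept.sem I C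
  | .inv r => fun x y => I.rInt r y x
  | .univ => fun _ _ => True
end

/-- `Z` is an `L_Φ`-bisimulation between `I` and `I'`. -/
def Bisim {CN RN IN D D' : Type} (Φ : DLFeat) (I : Interp CN RN IN D)
    (I' : Interp CN RN IN D') (Z : D → D' → Prop) : Prop :=
  (∀ a : IN, Z (I.iInt a) (I'.iInt a)) ∧
  (∀ (A : CN) x x', Z x x' → (x ∈ I.cInt A ↔ x' ∈ I'.cInt A)) ∧
  (∀ (r : RN) x x' y, Z x x' → I.rInt r x y → ∃ y', Z y y' ∧ I'.rInt r x' y') ∧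
  (∀ (r : RN) x x' y', Z x x' → I'.rInt r x' y' → ∃ y, Z y y' ∧ I.rInt r x y) ∧
  (Φ.hasI = true →
    (∀ (r : RN) x x' y, Z x x' → I.rInt r y x → ∃ y', Z y y' ∧ I'.rInt r y' x') ∧
    (∀ (r : RN) x x' y', Z x x' → I'.rInt r y' x' → ∃ y, Z y y' ∧ I.rInt r y x)) ∧
  (Φ.hasO = true → ∀ (a : IN) x x', Z x x' → (x = I.iInt a ↔ x' = I'.iInt a)) ∧
  (Φ.hasQ = true → ∀ (r : RN) x x', Z x x' →
    ∃ h : {y // I.rInt r x y} ≃ {y' // I'.rInt r x' y'}, ∀ y, Z y.1 (h y).1) ∧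
  (Φ.hasQ = true → Φ.hasI = true → ∀ (r : RN) x x', Z x x' →
    ∃ h : {y // I.rInt r y x} ≃ {y' // I'.rInt r y' x'}, ∀ y, Z y.1 (h y).1) ∧
  (Φ.hasU = true → (∀ x, ∃ x', Z x x') ∧ (∀ x', ∃ x, Z x x')) ∧
  (Φ.hasSelf = true → ∀ (r : RN) x x', Z x x' → (I.rInt r x x ↔ I'.rInt r x' x'))

/-- One step along a basic role (role name, or inverse of a role name if `I ∈ Φ`). -/
def basicStep {CN RN IN D : Type} (Φ : DLFeat) (I : Interp CN RN IN D) (x y : D) : Prop :=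
  ∃ r : RN, I.rInt r x y ∨ (Φ.hasI = true ∧ I.rInt r y x)

/-- `I` is unreachable-objects-free: every element is reachable from some named
individual via a finite path of basic-role edges. -/
def UOF {CN RN IN D : Type} (Φ : DLFeat) (I : Interp CN RN IN D) : Prop :=
  ∀ x : D, ∃ a : IN, Relation.ReflTransGen (basicStep Φ I) (I.iInt a) x

/-- `I` validates the GCI `C ⊑ C'`. -/
def satGCI {CN RN IN D : Type} (I : Interp CN RN IN D) (C C' : DLConcept CN RN IN) : Prop :=
  DLConcept.sem I C ⊆ DLConcept.sem I C'

/-- `I` is a model of the TBox `T`. -/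
def modelsTBox {CN RN IN D : Type} (I : Interp CN RN IN D)
    (T : Set (DLConcept CN RN IN × DLConcept CN RN IN)) : Prop :=
  ∀ p ∈ T, satGCI I p.1 p.2

/-- Individual assertions. -/
inductive Assertion (CN RN IN : Type) : Type where
  | conc (C : DLConcept CN RN IN) (a : IN)
  | rolePos (R : DLRole CN RN IN) (a b : IN)
  | roleNeg (R : DLRole CN RN IN) (a b : IN)
  | eq (a b : IN)
  | neq (a b : IN)

/-- The assertion belongs to `L_Φ`. -/
def Assertion.inL {CN RN IN : Type} (Φ : DLFeat) : Assertion CN RN IN → Prop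
  | .conc C _ => C.inL Φ
  | .rolePos R _ _ => R.inL Φ
  | .roleNeg R _ _ => R.inL Φ
  | .eq _ _ => True
  | .neq _ _ => True

/-- `I` satisfies the individual assertion. -/
def Assertion.sat {CN RN IN D : Type} (I : Interp CN RN IN D) : Assertion CN RN IN → Prop
  | .conc C a => I.iInt a ∈ DLConcept.sem I C
  | .rolePos R a b => DLRole.sem I R (I.iInt a) (I.iInt b)
  | .roleNeg R a b => ¬ DLRole.sem I R (I.iInt a) (I.iInt b)
  | .eq a b => I.iInt a = I.iInt b
  | .neq a b => I.iInt a ≠ I.iInt b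

/-- `I` is a model of the ABox `A`. -/
def modelsABox {CN RN IN D : Type} (I : Interp CN RN IN D) (A : Set (Assertion CN RN IN)) : Prop :=
  ∀ φ ∈ A, φ.sat I

/-- A role axiom `R₁ ∘ … ∘ R_k ⊑ r` (`ε ⊑ r` when the list is empty), the `R_i` basic roles. -/
structure RoleAx (RN : Type) where
  lhs : List (RN × Bool)
  rhs : RN

/-- The role axiom is in `L_Φ` (inverse basic roles only if `I ∈ Φ`). -/
def RoleAx.inL {RN : Type} (Φ : DLFeat) (ax : RoleAx RN) : Prop :=
  ∀ p ∈ ax.lhs, p.2 = true → Φ.hasI = true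

/-- Interpretation of a composition chain of basic roles (`ε` for the empty chain). -/
def chainInt {CN RN IN D : Type} (I : Interp CN RN IN D) : List (RN × Bool) → D → D → Prop
  | [] => Eq
  | R :: l => fun x z => ∃ y, brInt I R x y ∧ chainInt I l y z

/-- `I` validates the role axiom. -/
def satRoleAx {CN RN IN D : Type} (I : Interp CN RN IN D) (ax : RoleAx RN) : Prop :=
  ∀ x y, chainInt I ax.lhs x y → I.rInt ax.rhs x y

/-- `I` is a model of the RBox `R`. -/
def modelsRBox {CN RN IN D : Type} (I : Interp CN RN IN D) (R : Set (RoleAx RN)) : Prop :=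
  ∀ ax ∈ R, satRoleAx I ax

/-- `I'` is an r-extension of `I`. -/
def RExt {CN RN IN D : Type} (I I' : Interp CN RN IN D) : Prop :=
  I'.cInt = I.cInt ∧ I'.iInt = I.iInt ∧ ∀ (r : RN) x y, I.rInt r x y → I'.rInt r x y

/-- `I'` is the least r-extension of `I` validating the RBox `R`. -/
def LeastRExt {CN RN IN D : Type} (I : Interp CN RN IN D) (R : Set (RoleAx RN))
    (I' : Interp CN RN IN D) : Prop :=
  RExt I I' ∧ modelsRBox I' R ∧
    ∀ I'' : Interp CN RN IN D, RExt I I'' → modelsRBox I'' R →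
      ∀ (r : RN) x y, I'.rInt r x y → I''.rInt r x y

/-- `I` is finitely branching w.r.t. `L_Φ`. -/
def FinBranch {CN RN IN D : Type} (Φ : DLFeat) (I : Interp CN RN IN D) : Prop :=
  ∀ (r : RN) (x : D), {y | I.rInt r x y}.Finite ∧ (Φ.hasI = true → {y | I.rInt r y x}.Finite)

/-- `x` and `x'` are `L_Φ`-equivalent: they satisfy the same concepts of `L_Φ`. -/
def LEquiv {CN RN IN D D' : Type} (Φ : DLFeat) (I : Interp CN RN IN D)
    (I' : Interp CN RN IN D') (x : D) (x' : D') : Prop :=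
  ∀ C : DLConcept CN RN IN, C.inL Φ → (x ∈ DLConcept.sem I C ↔ x' ∈ DLConcept.sem I' C)

/-- The largest `L_Φ`-auto-bisimulation of `I` (union of all auto-bisimulations). -/
def gbisim {CN RN IN D : Type} (Φ : DLFeat) (I : Interp CN RN IN D) (x y : D) : Prop :=
  ∃ Z, Bisim Φ I I Z ∧ Z x y

/-- The quotient interpretation of `I` w.r.t. the largest `L_Φ`-auto-bisimulation. -/
def quotInterp {CN RN IN D : Type} (Φ : DLFeat) (I : Interp CN RN IN D) :
    Interp CN RN IN (Quot (gbisim Φ I)) where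
  cInt A := {q | ∃ x, Quot.mk _ x = q ∧ x ∈ I.cInt A}
  rInt r q q' := ∃ x y, Quot.mk _ x = q ∧ Quot.mk _ y = q' ∧ I.rInt r x y
  iInt a := Quot.mk _ (I.iInt a)

/-- A QS-interpretation: an interpretation together with multiplicity functions for
basic roles and self-loop sets for role names. -/
structure QSInterp (CN RN IN D : Type) where
  toInterp : Interp CN RN IN D
  QU : (RN × Bool) → D → D → ℕ
  SE : RN → Set D

/-- The defining positivity condition of QS-interpretations:
`QU R x y > 0` iff `R` connects `x` to `y`. -/
def QSInterp.Proper {CN RN IN D : Type} (J : QSInterp CN RN IN D) : Prop :=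
  ∀ (R : RN × Bool) x y, 0 < J.QU R x y ↔ brInt J.toInterp R x y

/-- `Σ {f y : y ∈ S}` as an extended natural number. -/
noncomputable def qsum {D : Type} (f : D → ℕ) (S : Set D) : ℕ∞ :=
  ⨆ (s : Finset D) (_ : ↑s ⊆ S), (∑ y ∈ s, f y : ℕ∞)

mutual
/-- Semantics of concepts in a QS-interpretation. -/
noncomputable def DLConcept.qsem {CN RN IN D : Type} (J : QSInterp CN RN IN D) :
    DLConcept CN RN IN → Set D
  | .atom A => J.toInterp.cInt A
  | .top => Set.univ
  | .bot => ∅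
  | .neg C => (DLConcept.qsem J C)ᶜ
  | .conj C C' => DLConcept.qsem J C ∩ DLConcept.qsem J C'
  | .disj C C' => DLConcept.qsem J C ∪ DLConcept.qsem J C'
  | .all R C => {x | ∀ y, DLRole.qsem J R x y → y ∈ DLConcept.qsem J C}
  | .ex R C => {x | ∃ y, DLRole.qsem J R x y ∧ y ∈ DLConcept.qsem J C}
  | .nom a => {J.toInterp.iInt a}
  | .atLeast n r b C => {x | (n : ℕ∞) ≤ qsum (J.QU (r, b) x) (DLConcept.qsem J C)}
  | .atMost n r b C => {x | qsum (J.QU (r, b) x) (DLConcept.qsem J C) ≤ (n : ℕ∞)}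
  | .exSelf r => J.SE r
/-- Semantics of roles in a QS-interpretation. -/
noncomputable def DLRole.qsem {CN RN IN D : Type} (J : QSInterp CN RN IN D) :
    DLRole CN RN IN → D → D → Prop
  | .name r => J.toInterp.rInt r
  | .eps => Eq
  | .comp R S => Relation.Comp (DLRole.qsem J R) (DLRole.qsem J S)
  | .runion R S => fun x y => DLRole.qsem J R x y ∨ DLRole.qsem J S x y
  | .star R => Relation.ReflTransGen (DLRole.qsem J R)
  | .test C => fun x y => x = y ∧ x ∈ DLConcept.qsem J C
  | .inv r => fun x y => J.toInterp.rInt r y x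
  | .univ => fun _ _ => True
end

/-- The quotient QS-interpretation of a traditional interpretation `I` w.r.t. the
largest `L_Φ`-auto-bisimulation. -/
noncomputable def qsQuot {CN RN IN D : Type} (Φ : DLFeat) (I : Interp CN RN IN D) :
    QSInterp CN RN IN (Quot (gbisim Φ I)) where
  toInterp := quotInterp Φ I
  QU R q q' := sSup {n | ∃ x, Quot.mk _ x = q ∧
    n = Set.ncard {y | Quot.mk (gbisim Φ I) y = q' ∧ brInt I R x y}}
  SE r := {q | ∃ x, Quot.mk _ x = q ∧ I.rInt r x x}

/-! Bisimilarity is transported along basic-role paths by the zig conditions (and their inverse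
versions when `I ∈ Φ`). In an unreachable-objects-free interpretation every element lies on such a
path from a named individual, and named individuals are related by any bisimulation, so `Z` is
total on both sides. Since `L_Φ`-concepts are invariant under `L_Φ`-bisimulation, each inclusion
`C ⊑ C'` can then be checked at a related element on the other side. -/

namespace Bisim

variable {CN RN IN : Type} {Φ : DLFeat}

section

variable {D D' : Type} {I : Interp CN RN IN D} {I' : Interp CN RN IN D'} {Z : D → D' → Prop}

theorem symm (hZ : Bisim Φ I I' Z) : Bisim Φ I' I (flip Z) := by
  obtain ⟨hInd, hAtom, hZig, hZag, hInv, hNom, hQ, hQI, hU, hSelf⟩ := hZ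
  refine ⟨hInd, fun A x' x hx => (hAtom A x x' hx).symm, fun r x' x y' hx h => hZag r x x' y' hx h,
    fun r x' x y hx h => hZig r x x' y hx h,
    fun hI => ⟨fun r x' x y' hx h => (hInv hI).2 r x x' y' hx h,
      fun r x' x y hx h => (hInv hI).1 r x x' y hx h⟩,
    fun hO a x' x hx => (hNom hO a x x' hx).symm, fun hq r x' x hx => ?_,
    fun hq hI r x' x hx => ?_, fun hu => (hU hu).symm, fun hs r x' x hx => (hSelf hs r x x' hx).symm⟩
  · obtain ⟨e, he⟩ := hQ hq r x x' hx
    exact ⟨e.symm, fun y' => by simpa [flip] using he (e.symm y')⟩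
  · obtain ⟨e, he⟩ := hQI hq hI r x x' hx
    exact ⟨e.symm, fun y' => by simpa [flip] using he (e.symm y')⟩

theorem exists_brInt_equiv (hZ : Bisim Φ I I' Z) {r : RN} {b : Bool} (hq : Φ.hasQ = true)
    (hb : b = true → Φ.hasI = true) {x : D} {x' : D'} (hx : Z x x') :
    ∃ e : {y // brInt I (r, b) x y} ≃ {y' // brInt I' (r, b) x' y'}, ∀ y, Z y.1 (e y).1 := by
  cases b
  · exact hZ.2.2.2.2.2.2.1 hq r x x' hx
  · exact hZ.2.2.2.2.2.2.2.1 hq (hb rfl) r x x' hx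

theorem mk_brInt_and_mem_eq (hZ : Bisim Φ I I' Z) {r : RN} {b : Bool} (hq : Φ.hasQ = true)
    (hb : b = true → Φ.hasI = true) {S : Set D} {S' : Set D'}
    (hS : ∀ y y', Z y y' → (y ∈ S ↔ y' ∈ S')) {x : D} {x' : D'} (hx : Z x x') :
    Cardinal.mk {y // brInt I (r, b) x y ∧ y ∈ S}
      = Cardinal.mk {y' // brInt I' (r, b) x' y' ∧ y' ∈ S'} := by
  obtain ⟨e, he⟩ := hZ.exists_brInt_equiv hq hb hx
  exact Cardinal.mk_congr <| (Equiv.subtypeSubtypeEquivSubtypeInter _ _).symm.trans <|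
    (e.subtypeEquiv fun y => hS _ _ (he y)).trans (Equiv.subtypeSubtypeEquivSubtypeInter _ _)

end

mutual

theorem mem_sem_iff {D D' : Type} {I : Interp CN RN IN D} {I' : Interp CN RN IN D'}
    {Z : D → D' → Prop} (hZ : Bisim Φ I I' Z) {C : DLConcept CN RN IN} (hC : C.inL Φ)
    {x : D} {x' : D'} (hx : Z x x') : x ∈ C.sem I ↔ x' ∈ C.sem I' := by
  cases C with
  | atom A => exact hZ.2.1 A x x' hx
  | top => exact iff_of_true trivial trivial
  | bot => exact iff_of_false id id
  | neg C => exact not_congr (hZ.mem_sem_iff (C := C) hC hx)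
  | conj C C' => exact and_congr (hZ.mem_sem_iff hC.1 hx) (hZ.mem_sem_iff hC.2 hx)
  | disj C C' => exact or_congr (hZ.mem_sem_iff hC.1 hx) (hZ.mem_sem_iff hC.2 hx)
  | all R C =>
      refine ⟨fun h y' hy' => ?_, fun h y hy => ?_⟩
      · obtain ⟨y, hyy', hxy⟩ := hZ.symm.sem_zig hC.1 hx hy'
        exact (hZ.mem_sem_iff hC.2 hyy').1 (h y hxy)
      · obtain ⟨y', hyy', hxy'⟩ := hZ.sem_zig hC.1 hx hy
        exact (hZ.mem_sem_iff hC.2 hyy').2 (h y' hxy')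
  | ex R C =>
      refine ⟨fun ⟨y, hxy, hy⟩ => ?_, fun ⟨y', hxy', hy'⟩ => ?_⟩
      · obtain ⟨y', hyy', hxy'⟩ := hZ.sem_zig hC.1 hx hxy
        exact ⟨y', hxy', (hZ.mem_sem_iff hC.2 hyy').1 hy⟩
      · obtain ⟨y, hyy', hxy⟩ := hZ.symm.sem_zig hC.1 hx hxy'
        exact ⟨y, hxy, (hZ.mem_sem_iff hC.2 hyy').2 hy'⟩
  | nom a => exact hZ.2.2.2.2.2.1 hC a x x' hx
  | atLeast n r b C =>
      obtain ⟨hq, hb, hC⟩ := hC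
      simp only [DLConcept.sem, Set.mem_ofPred_eq,
        hZ.mk_brInt_and_mem_eq (r := r) hq hb (fun _ _ hy => hZ.mem_sem_iff hC hy) hx]
  | atMost n r b C =>
      obtain ⟨hq, hb, hC⟩ := hC
      simp only [DLConcept.sem, Set.mem_ofPred_eq,
        hZ.mk_brInt_and_mem_eq (r := r) hq hb (fun _ _ hy => hZ.mem_sem_iff hC hy) hx]
  | exSelf r => exact hZ.2.2.2.2.2.2.2.2.2 hC r x x' hx

theorem sem_zig {D D' : Type} {I : Interp CN RN IN D} {I' : Interp CN RN IN D'}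
    {Z : D → D' → Prop} (hZ : Bisim Φ I I' Z) {R : DLRole CN RN IN} (hR : R.inL Φ)
    {x y : D} {x' : D'} (hx : Z x x') (hxy : R.sem I x y) : ∃ y', Z y y' ∧ R.sem I' x' y' := by
  cases R with
  | name r => exact hZ.2.2.1 r x x' y hx hxy
  | eps => exact ⟨x', hxy ▸ hx, rfl⟩
  | comp R S =>
      obtain ⟨z, hxz, hzy⟩ := hxy
      obtain ⟨z', hzz', hxz'⟩ := hZ.sem_zig hR.1 hx hxz
      obtain ⟨y', hyy', hzy'⟩ := hZ.sem_zig hR.2 hzz' hzy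
      exact ⟨y', hyy', z', hxz', hzy'⟩
  | runion R S =>
      rcases hxy with hxy | hxy
      · obtain ⟨y', hyy', hxy'⟩ := hZ.sem_zig hR.1 hx hxy
        exact ⟨y', hyy', Or.inl hxy'⟩
      · obtain ⟨y', hyy', hxy'⟩ := hZ.sem_zig hR.2 hx hxy
        exact ⟨y', hyy', Or.inr hxy'⟩
  | star R =>
      induction hxy with
      | refl => exact ⟨x', hx, .refl⟩
      | tail _ hzy ih =>
          obtain ⟨z', hzz', hxz'⟩ := ih
          obtain ⟨y', hyy', hzy'⟩ := hZ.sem_zig (R := R) hR hzz' hzy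
          exact ⟨y', hyy', hxz'.tail hzy'⟩
  | test C =>
      obtain ⟨rfl, hxC⟩ := hxy
      exact ⟨x', hx, rfl, (hZ.mem_sem_iff hR hx).1 hxC⟩
  | inv r => exact (hZ.2.2.2.2.1 hR).1 r x x' y hx hxy
  | univ =>
      obtain ⟨y', hyy'⟩ := (hZ.2.2.2.2.2.2.2.2.1 hR).1 y
      exact ⟨y', hyy', trivial⟩

end

variable {D D' : Type} {I : Interp CN RN IN D} {I' : Interp CN RN IN D'} {Z : D → D' → Prop}

theorem exists_of_reflTransGen_basicStep (hZ : Bisim Φ I I' Z) {x y : D} {x' : D'}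
    (hx : Z x x') (hxy : Relation.ReflTransGen (basicStep Φ I) x y) : ∃ y', Z y y' := by
  induction hxy with
  | refl => exact ⟨x', hx⟩
  | tail _ hzy ih =>
      obtain ⟨z', hzz'⟩ := ih
      obtain ⟨r, hzy | ⟨hI, hyz⟩⟩ := hzy
      · obtain ⟨y', hyy', -⟩ := hZ.2.2.1 r _ z' _ hzz' hzy
        exact ⟨y', hyy'⟩
      · obtain ⟨y', hyy', -⟩ := (hZ.2.2.2.2.1 hI).1 r _ z' _ hzz' hyz
        exact ⟨y', hyy'⟩

theorem exists_of_UOF (hZ : Bisim Φ I I' Z) (hI : UOF Φ I) (x : D) : ∃ x', Z x x' :=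
  let ⟨a, ha⟩ := hI x
  hZ.exists_of_reflTransGen_basicStep (hZ.1 a) ha

theorem modelsTBox_of_modelsTBox (hZ : Bisim Φ I I' Z) (hZ_surj : ∀ x', ∃ x, Z x x')
    {T : Set (DLConcept CN RN IN × DLConcept CN RN IN)} (hT : ∀ p ∈ T, p.1.inL Φ ∧ p.2.inL Φ)
    (hIT : modelsTBox I T) : modelsTBox I' T := by
  intro p hp x' hx'
  obtain ⟨x, hx⟩ := hZ_surj x'
  exact (hZ.mem_sem_iff (hT p hp).2 hx).1 (hIT p hp ((hZ.mem_sem_iff (hT p hp).1 hx).2 hx'))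

end Bisim

/-- TBoxes in `L_Φ` are invariant under `L_Φ`-bisimulation between
unreachable-objects-free interpretations. -/
theorem tbox_invariance_uof {CN RN IN D D' : Type} (Φ : DLFeat)
    (I : Interp CN RN IN D) (I' : Interp CN RN IN D')
    (hI : UOF Φ I) (hI' : UOF Φ I')
    (T : Set (DLConcept CN RN IN × DLConcept CN RN IN)) (hfin : T.Finite)
    (hT : ∀ p ∈ T, p.1.inL Φ ∧ p.2.inL Φ)
    (hbisim : ∃ Z, Bisim Φ I I' Z) :
    modelsTBox I T ↔ modelsTBox I' T := by
  obtain ⟨Z, hZ⟩ := hbisim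
  exact ⟨hZ.modelsTBox_of_modelsTBox (hZ.symm.exists_of_UOF hI') hT,
    hZ.symm.modelsTBox_of_modelsTBox (hZ.exists_of_UOF hI) hT⟩
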